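/- In the ring of formal power series in x with coefficients in ℤ[q], the series S(x) = Σ_{m=0}^{∞} x^m (x;q)_m satisfies the functional equation S(x) = 1 + x − qx³ · S(qx), where S(qx) denotes the power series obtained from S(x) by rescaling x to qx. -/

import Mathlib

/-- The parameter `q`, viewed as a constant of the power series ring `ℤ[q][[x]]`. -/
noncomputable def qc : PowerSeries (Polynomial ℤ) :=
  PowerSeries.C Polynomial.X

/-- The q-Pochhammer symbol `(x;q)_m = (1-x)(1-qx)⋯(1-q^{m-1}x)` in `ℤ[q][[x]]`. -/
noncomputable def qPoch (m : ℕ) : PowerSeries (Polynomial ℤ) :=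
  ∏ i ∈ Finset.range m, (1 - qc ^ i * PowerSeries.X)

/-- The sum `∑_{m=0}^∞ f m` of a family of power series whose `m`-th member is
divisible by `x^m`. -/
noncomputable def seriesSum (f : ℕ → PowerSeries (Polynomial ℤ)) :
    PowerSeries (Polynomial ℤ) :=
  PowerSeries.mk fun d => PowerSeries.coeff d (∑ m ∈ Finset.range (d + 1), f m)

/-- `S(x) = ∑_{m=0}^∞ x^m (x;q)_m ∈ ℤ[q][[x]]`. -/
noncomputable def Sseries : PowerSeries (Polynomial ℤ) :=
  seriesSum fun m => PowerSeries.X ^ m * qPoch m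

/-!
Since `(x;q)_{m+1} = (1-x)(qx;q)_m`, the partial sums of `S` telescope against those of
`S(qx) = ∑ q^m x^m (qx;q)_m`:
`∑_{m ≤ N} x^m (x;q)_m = 1 + x - x^{N+1} (qx;q)_N - qx³ ∑_{m < N} q^m x^m (qx;q)_m`.
The error terms are divisible by `x^{N+1}`, so the two sides of the functional equation agree
modulo every power of `x`.
-/

open PowerSeries Finset

namespace PowerSeries

theorem eq_of_forall_X_pow_dvd_sub {R : Type*} [CommRing R] {f g : R⟦X⟧}
    (h : ∀ n, (X : R⟦X⟧) ^ n ∣ f - g) : f = g := by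
  ext d
  rw [← sub_eq_zero, ← map_sub]
  exact X_pow_dvd_iff.mp (h (d + 1)) d d.lt_succ_self

variable {R : Type*} [CommSemiring R]

theorem rescale_C (a r : R) : rescale a (C r) = C r := by
  ext n
  rcases eq_or_ne n 0 with rfl | hn <;> simp [coeff_C, *]

theorem X_pow_dvd_rescale {n : ℕ} {f : R⟦X⟧} (a : R) (h : (X : R⟦X⟧) ^ n ∣ f) :
    (X : R⟦X⟧) ^ n ∣ rescale a f := by
  rw [X_pow_dvd_iff] at h ⊢
  intro m hm
  rw [coeff_rescale, h m hm, mul_zero]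

end PowerSeries

theorem X_pow_dvd_seriesSum_sub {f : ℕ → PowerSeries (Polynomial ℤ)}
    (hf : ∀ m, X ^ m ∣ f m) (N : ℕ) :
    X ^ N ∣ seriesSum f - ∑ m ∈ range N, f m := by
  rw [X_pow_dvd_iff]
  intro d hd
  rw [map_sub, seriesSum, coeff_mk, sub_eq_zero, map_sum, map_sum]
  refine sum_subset (range_subset_range.mpr hd) fun m _ hm => ?_
  exact X_pow_dvd_iff.mp (hf m) d (by simpa using hm)

/-- The shifted q-Pochhammer symbol `(qx;q)_m = (1-qx)(1-q²x)⋯(1-q^m x)`. -/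
noncomputable def qPochShift (m : ℕ) : PowerSeries (Polynomial ℤ) :=
  ∏ i ∈ range m, (1 - qc ^ (i + 1) * X)

theorem qPoch_succ (m : ℕ) : qPoch (m + 1) = (1 - X) * qPochShift m := by
  rw [qPoch, prod_range_succ', pow_zero, one_mul, mul_comm, qPochShift]

theorem qPochShift_succ (m : ℕ) :
    qPochShift (m + 1) = qPochShift m * (1 - qc ^ (m + 1) * X) :=
  prod_range_succ _ _

theorem rescale_X_pow_mul_qPoch (m : ℕ) :
    rescale Polynomial.X (X ^ m * qPoch m) = qc ^ m * X ^ m * qPochShift m := by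
  have hqx : rescale Polynomial.X X = qc * X := rescale_X _
  have hq : rescale Polynomial.X qc = qc := rescale_C _ _
  simp only [map_mul, map_pow, map_prod, map_sub, map_one, qPoch, qPochShift, hqx, hq]
  rw [mul_pow]
  exact congrArg _ (prod_congr rfl fun i _ => by ring)

theorem sum_range_succ_X_pow_mul_qPoch (N : ℕ) :
    ∑ m ∈ range (N + 1), X ^ m * qPoch m
      = 1 + X - X ^ (N + 1) * qPochShift N
        - qc * X ^ 3 * rescale Polynomial.X (∑ m ∈ range N, X ^ m * qPoch m) := by
  induction N with
  | zero => simp [qPoch, qPochShift]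
  | succ N ih =>
    conv_lhs => rw [sum_range_succ, ih]
    rw [sum_range_succ, map_add, rescale_X_pow_mul_qPoch, qPoch_succ, qPochShift_succ]
    ring

/-- The functional equation `S(x) = 1 + x - qx³ S(qx)` in `ℤ[q][[x]]`, where `S(qx)` is
obtained from `S(x)` by rescaling `x` to `qx`. -/
theorem Sseries_functional_equation :
    Sseries = 1 + PowerSeries.X
      - qc * PowerSeries.X ^ 3 * PowerSeries.rescale Polynomial.X Sseries := by
  refine eq_of_forall_X_pow_dvd_sub fun N => ?_
  have hdvd : ∀ n, X ^ n ∣ Sseries - ∑ m ∈ range n, X ^ m * qPoch m :=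
    X_pow_dvd_seriesSum_sub fun m => dvd_mul_right _ _
  have hsplit : Sseries - (1 + X - qc * X ^ 3 * rescale Polynomial.X Sseries)
      = (Sseries - ∑ m ∈ range (N + 1), X ^ m * qPoch m) - X ^ (N + 1) * qPochShift N
        + qc * X ^ 3 * rescale Polynomial.X (Sseries - ∑ m ∈ range N, X ^ m * qPoch m) := by
    rw [sum_range_succ_X_pow_mul_qPoch, map_sub]
    ring
  have hN : (X : PowerSeries (Polynomial ℤ)) ^ N ∣ X ^ (N + 1) := pow_dvd_pow _ N.le_succ
  rw [hsplit]
  refine dvd_add (dvd_sub (hN.trans (hdvd _)) (hN.trans (dvd_mul_right _ _))) ?_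
  exact (X_pow_dvd_rescale _ (hdvd N)).mul_left _
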